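/- If w = ps where s is the longest E-palindromic suffix of w, then the pseudopalindromic closure of w equals p·s·E(p). -/
import Mathlib


abbrev Word := List Bool

/-- The exchange antimorphism `E`: complement each letter and reverse. -/
def Ebar (w : Word) : Word := (w.map Bool.not).reverse

def IsPal (w : Word) : Prop := w.reverse = w
def IsEPal (w : Word) : Prop := Ebar w = w

open Classical in
lemma exists_minLength {Q : Word → Prop} (hex : ∃ v, Q v) :
    ∃ v, Q v ∧ ∀ v', Q v' → v.length ≤ v'.length := by
  classical
  have h : ∃ n, ∃ v, Q v ∧ v.length = n := ⟨_, hex.choose, hex.choose_spec, rfl⟩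
  obtain ⟨v, hv, hlen⟩ := Nat.find_spec h
  exact ⟨v, hv, fun v' hv' => by
    rw [hlen]; exact Nat.find_min' h ⟨v', hv', rfl⟩⟩

lemma pal_ext (w : Word) : ∃ v, w <+: v ∧ IsPal v :=
  ⟨w ++ w.reverse, List.prefix_append _ _, by simp [IsPal]⟩

lemma epal_ext (w : Word) : ∃ v, w <+: v ∧ IsEPal v :=
  ⟨w ++ Ebar w, List.prefix_append _ _, by
    simp [IsEPal, Ebar, List.map_reverse, List.map_map, Function.comp_def, Bool.not_not]⟩

/-- The palindromic closure: the shortest palindrome having `w` as a prefix. -/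
noncomputable def palCl (w : Word) : Word := (exists_minLength (pal_ext w)).choose

/-- The pseudopalindromic closure: the shortest `E`-palindrome having `w` as a prefix. -/
noncomputable def epalCl (w : Word) : Word := (exists_minLength (epal_ext w)).choose


lemma Ebar_append (u v : Word) : Ebar (u ++ v) = Ebar v ++ Ebar u := by
  simp [Ebar]

lemma Ebar_Ebar (w : Word) : Ebar (Ebar w) = w := by
  simp [Ebar, List.map_reverse, List.map_map, Function.comp_def, Bool.not_not]

lemma length_Ebar (w : Word) : (Ebar w).length = w.length := by
  simp [Ebar]

/-- if `w = p ++ s` with `s` the longest `E`-palindromic suffix of `w`,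
then the pseudopalindromic closure of `w` is `p ++ s ++ E(p)`. -/
theorem epalCl_eq_of_longest_epalindromic_suffix (w p s : Word)
    (hw : w = p ++ s) (hs : IsEPal s)
    (hlongest : ∀ s' : Word, s' <:+ w → IsEPal s' → s'.length ≤ s.length) :
    epalCl w = p ++ s ++ Ebar p := by
  obtain ⟨⟨hpre, hepal⟩, hmin⟩ :
      (w <+: epalCl w ∧ IsEPal (epalCl w)) ∧
        ∀ v', (w <+: v' ∧ IsEPal v') → (epalCl w).length ≤ v'.length :=
    (exists_minLength (epal_ext w)).choose_spec
  set v := epalCl w with hv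
  -- the candidate p ++ s ++ Ebar p is an E-palindrome with prefix w
  have hs' : Ebar s = s := hs
  have hepal' : Ebar v = v := hepal
  have hcand : IsEPal (p ++ s ++ Ebar p) := by
    simp only [IsEPal, Ebar_append, Ebar_Ebar, hs']
    rw [List.append_assoc]
  have hcandpre : w <+: p ++ s ++ Ebar p := by
    rw [hw, List.append_assoc]; exact ⟨Ebar p, by simp⟩
  have hle : v.length ≤ w.length + p.length := by
    have := hmin _ ⟨hcandpre, hcand⟩
    simpa [hw, length_Ebar, Nat.add_assoc] using this
  obtain ⟨t, htv⟩ := hpre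
  have hkle : t.length ≤ p.length := by
    have hvl : v.length = w.length + t.length := by rw [← htv]; simp
    omega
  have hkw : t.length ≤ w.length := by
    have : p.length ≤ w.length := by simp [hw]
    omega
  set k := t.length with hk
  set s'' := w.drop k with hs''
  -- Ebar w and s'' ++ t are both suffixes of v of length w.length
  have hsuf1 : Ebar w <:+ v := by
    refine ⟨Ebar t, ?_⟩
    rw [← Ebar_append, htv, hepal']
  have hsuf2 : s'' ++ t <:+ v := by
    refine ⟨w.take k, ?_⟩
    rw [← List.append_assoc, List.take_append_drop, htv]
  have hlen12 : (Ebar w).length = (s'' ++ t).length := by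
    simp [length_Ebar, hs'', hk]
    omega
  have heq1 : Ebar w = s'' ++ t :=
    (List.suffix_of_suffix_length_le hsuf1 hsuf2 hlen12.le).eq_of_length hlen12
  have heq2 : w = Ebar t ++ Ebar s'' := by
    have := congrArg Ebar heq1
    rwa [Ebar_Ebar, Ebar_append] at this
  -- so Ebar s'' is a suffix of w of the same length as the suffix s'' : they are equal
  have hsufs : s'' <:+ w := List.drop_suffix k w
  have hsufE : Ebar s'' <:+ w := ⟨Ebar t, heq2.symm⟩
  have hlenE : (Ebar s'').length = s''.length := length_Ebar s''
  have hEpal'' : IsEPal s'' :=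
    (List.suffix_of_suffix_length_le hsufE hsufs hlenE.le).eq_of_length hlenE
  have hlong := hlongest s'' hsufs hEpal''
  have hslen : s''.length = w.length - k := by simp [hs'']
  have hwlen : w.length = p.length + s.length := by simp [hw]
  have hkp : k = p.length := by omega
  -- s'' and s are suffixes of w of the same length, hence equal
  have hss : s'' = s := by
    have hsufS : s <:+ w := ⟨p, hw.symm⟩
    have hl : s''.length = s.length := by omega
    exact (List.suffix_of_suffix_length_le hsufs hsufS hl.le).eq_of_length hl
  have hE'' : Ebar s'' = s'' := hEpal''
  have hEt : Ebar t = p := by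
    have h1 : Ebar t ++ s = w := by rw [← hss, ← hE'']; exact heq2.symm
    exact List.append_cancel_right (h1.trans hw)
  have ht : t = Ebar p := by rw [← hEt, Ebar_Ebar]
  rw [← htv, hw, ht, List.append_assoc]
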